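/- arXiv:1612.03209 — 2 statements merged into one kernel-verified Lean document; each statement's English description precedes it below -/
import Mathlib

section
/- Let x, y ∈ (0, ∞) satisfy (x − 1)(y − 1) ≥ 0 and x + y > 1. Then ∫₀¹ (1 − t)^(x−1) · t^(y−1) dt ≤ 1 / (x + y − 1). -/
open MeasureTheory Set

/-
The exponents a = x - 1 and b = y - 1 have the same sign, so with c = a + b the weights a / c and
b / c are nonnegative and sum to one. Weighted AM-GM then bounds the integrand pointwise:
(1 - t) ^ a * t ^ b = ((1 - t) ^ c) ^ (a / c) * (t ^ c) ^ (b / c) ≤ a / c * (1 - t) ^ c + b / c * t ^ c,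
and both terms on the right integrate to 1 / (c + 1) over (0, 1).
-/

lemma integrableOn_rpow_Ioo_zero_one {c : ℝ} (hc : -1 < c) :
    IntegrableOn (fun t : ℝ => t ^ c) (Ioo 0 1) :=
  ((intervalIntegrable_iff_integrableOn_Ioc_of_le zero_le_one).mp
    (intervalIntegral.intervalIntegrable_rpow' hc)).mono_set Ioo_subset_Ioc_self

lemma integrableOn_one_sub_rpow_Ioo_zero_one {c : ℝ} (hc : -1 < c) :
    IntegrableOn (fun t : ℝ => (1 - t) ^ c) (Ioo 0 1) := by
  have h := (intervalIntegral.intervalIntegrable_rpow' (a := 0) (b := 1) hc).comp_sub_left 1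
  simp only [sub_zero, sub_self] at h
  exact ((intervalIntegrable_iff_integrableOn_Ioc_of_le zero_le_one).mp h.symm).mono_set
    Ioo_subset_Ioc_self

lemma integral_rpow_Ioo_zero_one {c : ℝ} (hc : -1 < c) :
    ∫ t in Ioo (0 : ℝ) 1, t ^ c = 1 / (c + 1) := by
  rw [← integral_Ioc_eq_integral_Ioo, ← intervalIntegral.integral_of_le zero_le_one,
    integral_rpow (Or.inl hc), Real.one_rpow, Real.zero_rpow (by linarith)]
  ring

lemma integral_one_sub_rpow_Ioo_zero_one {c : ℝ} (hc : -1 < c) :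
    ∫ t in Ioo (0 : ℝ) 1, (1 - t) ^ c = 1 / (c + 1) := by
  have h := intervalIntegral.integral_comp_sub_left (fun s : ℝ => s ^ c) (a := 0) (b := 1) 1
  simp only [sub_zero, sub_self] at h
  rw [← integral_Ioc_eq_integral_Ioo, ← intervalIntegral.integral_of_le zero_le_one, h,
    intervalIntegral.integral_of_le zero_le_one, integral_Ioc_eq_integral_Ioo,
    integral_rpow_Ioo_zero_one hc]

lemma rpow_mul_rpow_le_add_of_mul_nonneg {a b u v : ℝ} (hab : 0 ≤ a * b) (hne : a + b ≠ 0)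
    (hu : 0 ≤ u) (hv : 0 ≤ v) :
    u ^ a * v ^ b ≤ a / (a + b) * u ^ (a + b) + b / (a + b) * v ^ (a + b) := by
  have weight_nonneg : ∀ p, 0 ≤ p * (a + b) → 0 ≤ p / (a + b) := fun p hp => by
    rw [← mul_div_mul_right p (a + b) hne, ← sq]
    positivity
  have hwa := weight_nonneg a (by nlinarith [sq_nonneg a])
  have hwb := weight_nonneg b (by nlinarith [sq_nonneg b])
  have hw : a / (a + b) + b / (a + b) = 1 := by rw [← add_div, div_self hne]
  calc u ^ a * v ^ b = (u ^ (a + b)) ^ (a / (a + b)) * (v ^ (a + b)) ^ (b / (a + b)) := by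
        rw [← Real.rpow_mul hu, ← Real.rpow_mul hv, mul_div_cancel₀ _ hne,
          mul_div_cancel₀ _ hne]
    _ ≤ _ := Real.geom_mean_le_arith_mean2_weighted hwa hwb (by positivity) (by positivity) hw

lemma setIntegral_one_sub_rpow_mul_rpow_le_of_ne_zero {a b : ℝ} (hab : 0 ≤ a * b)
    (hne : a + b ≠ 0) (hlt : -1 < a + b) :
    ∫ t in Ioo (0 : ℝ) 1, (1 - t) ^ a * t ^ b ≤ 1 / (a + b + 1) := by
  set c := a + b
  set g : ℝ → ℝ := fun t => a / c * (1 - t) ^ c + b / c * t ^ c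
  have hbound : ∀ t ∈ Ioo (0 : ℝ) 1, (1 - t) ^ a * t ^ b ≤ g t := fun t ht =>
    rpow_mul_rpow_le_add_of_mul_nonneg hab hne (by linarith [ht.2]) ht.1.le
  have hg₁ := (integrableOn_one_sub_rpow_Ioo_zero_one hlt).const_mul (a / c)
  have hg₂ := (integrableOn_rpow_Ioo_zero_one hlt).const_mul (b / c)
  have hf : IntegrableOn (fun t : ℝ => (1 - t) ^ a * t ^ b) (Ioo 0 1) := by
    refine (hg₁.add hg₂).mono' (by fun_prop) ?_
    filter_upwards [ae_restrict_mem measurableSet_Ioo] with t ht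
    rw [Real.norm_of_nonneg
      (mul_nonneg (Real.rpow_nonneg (by linarith [ht.2]) _) (Real.rpow_nonneg ht.1.le _))]
    exact hbound t ht
  calc ∫ t in Ioo (0 : ℝ) 1, (1 - t) ^ a * t ^ b
      ≤ ∫ t in Ioo (0 : ℝ) 1, g t := setIntegral_mono_on hf (hg₁.add hg₂) measurableSet_Ioo hbound
    _ = (a / c + b / c) * (1 / (c + 1)) := by
      rw [integral_add hg₁ hg₂, integral_const_mul, integral_const_mul,
        integral_one_sub_rpow_Ioo_zero_one hlt, integral_rpow_Ioo_zero_one hlt, add_mul]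
    _ = 1 / (a + b + 1) := by rw [← add_div, div_self hne, one_mul]

lemma setIntegral_one_sub_rpow_mul_rpow_le {a b : ℝ} (hab : 0 ≤ a * b) (hlt : -1 < a + b) :
    ∫ t in Ioo (0 : ℝ) 1, (1 - t) ^ a * t ^ b ≤ 1 / (a + b + 1) := by
  rcases eq_or_ne (a + b) 0 with hzero | hne
  · obtain rfl : a = 0 := by nlinarith
    obtain rfl : b = 0 := by linarith
    simp
  · exact setIntegral_one_sub_rpow_mul_rpow_le_of_ne_zero hab hne hlt

theorem stmt0_general (x y : ℝ)
    (hsign : 0 ≤ (x - 1) * (y - 1)) (hsum : 1 < x + y) :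
    ∫ t in Set.Ioo (0 : ℝ) 1, (1 - t) ^ (x - 1) * t ^ (y - 1) ≤ 1 / (x + y - 1) := by
  have h := setIntegral_one_sub_rpow_mul_rpow_le hsign (by linarith)
  rwa [show x - 1 + (y - 1) + 1 = x + y - 1 by ring] at h

/-- Beta function bound: for x, y > 0 with (x-1)(y-1) ≥ 0 and x + y > 1,
∫₀¹ (1-t)^(x-1) t^(y-1) dt ≤ 1/(x+y-1). -/
theorem stmt0 (x y : ℝ) (hx : 0 < x) (hy : 0 < y)
    (hsign : 0 ≤ (x - 1) * (y - 1)) (hsum : 1 < x + y) :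
    ∫ t in Set.Ioo (0 : ℝ) 1, (1 - t) ^ (x - 1) * t ^ (y - 1) ≤ 1 / (x + y - 1) :=
  stmt0_general x y hsign hsum
end

section
/- Let T ∈ (0, ∞), h ∈ (0, T], ρ ∈ (0, ∞), r ∈ [0, ∞), and δ ∈ [0, ∞), and set κ₀ = min{1, T} · (h/T)^(2r/(ρ + 6δ)). Then κ₀ ∈ (0, T] and max{ 4·κ₀^(ρ/2), 57·max{1, κ₀^(−3δ)}·h^r } ≤ 57 · h^(ρ·r/(ρ + 6δ)) / ( min{T, 1/T} )^(r + 3δ). -/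
/-!
Write `s = ρ + 6δ`, `q = h / T ∈ (0, 1]` and `m = min T (1 / T) ≤ 1`. The exponent `2r / s` of `q`
splits `h ^ r` as `h ^ (ρr/s) · h ^ (6δr/s)`: raising `κ₀` to `ρ / 2` produces exactly
`q ^ (ρr/s)`, while raising it to `-3δ` produces `q ^ (-6δr/s)`, whose `h`-part cancels the second
factor of `h ^ r`. What remains are powers of `T`, `1 / T` and `1 / min 1 T`, each bounded by the
corresponding power of `1 / m ≥ 1`, and the exponents add up to at most `r + 3δ`.
-/

open Real

noncomputable def mollificationParameter (T h ρ r δ : ℝ) : ℝ :=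
  min 1 T * (h / T) ^ (2 * r / (ρ + 6 * δ))

lemma rpow_le_rpow_of_le_of_exponent_le_of_le_one {m x a b : ℝ} (hm : 0 < m) (hm1 : m ≤ 1)
    (hmx : m ≤ x) (ha : 0 ≤ a) (hab : a ≤ b) : m ^ b ≤ x ^ a :=
  (rpow_le_rpow_of_exponent_ge hm hm1 hab).trans (rpow_le_rpow hm.le hmx ha)

lemma rpow_le_rpow_of_le_of_exponent_le_of_one_le {M x a b : ℝ} (hx : 0 ≤ x) (hM1 : 1 ≤ M)
    (hxM : x ≤ M) (ha : 0 ≤ a) (hab : a ≤ b) : x ^ a ≤ M ^ b :=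
  (rpow_le_rpow hx hxM ha).trans (rpow_le_rpow_of_exponent_le hM1 hab)

section MinSelfOneDiv

variable {T : ℝ}

lemma min_self_one_div_pos (hT : 0 < T) : 0 < min T (1 / T) :=
  lt_min hT (one_div_pos.2 hT)

lemma min_self_one_div_le_one (hT : 0 < T) : min T (1 / T) ≤ 1 := by
  rcases le_total T 1 with hT1 | hT1
  · exact (min_le_left _ _).trans hT1
  · exact (min_le_right _ _).trans ((div_le_one hT).2 hT1)

lemma min_self_one_div_le_min_one (hT : 0 < T) : min T (1 / T) ≤ min 1 T :=
  le_min (min_self_one_div_le_one hT) (min_le_left _ _)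

lemma le_inv_min_self_one_div (hT : 0 < T) : T ≤ (min T (1 / T))⁻¹ :=
  le_inv_of_le_inv₀ (min_self_one_div_pos hT) ((min_le_right _ _).trans_eq (one_div T))

lemma min_self_one_div_rpow_le_rpow (hT : 0 < T) {a b : ℝ} (ha : 0 ≤ a) (hab : a ≤ b) :
    min T (1 / T) ^ b ≤ T ^ a :=
  rpow_le_rpow_of_le_of_exponent_le_of_le_one (min_self_one_div_pos hT)
    (min_self_one_div_le_one hT) (min_le_left _ _) ha hab

lemma min_one_rpow_neg_mul_rpow_le (hT : 0 < T) {a b c : ℝ} (ha : 0 ≤ a) (hb : 0 ≤ b)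
    (hbc : b ≤ c) : min 1 T ^ (-a) * T ^ b ≤ (min T (1 / T) ^ (c + a))⁻¹ := by
  have hm := min_self_one_div_pos hT
  have hM : 1 ≤ (min T (1 / T))⁻¹ := one_le_inv₀ hm |>.2 (min_self_one_div_le_one hT)
  rw [← inv_rpow hm.le, rpow_add (inv_pos.2 hm), mul_comm, rpow_neg (lt_min one_pos hT).le,
    ← inv_rpow (lt_min one_pos hT).le]
  exact mul_le_mul
    (rpow_le_rpow_of_le_of_exponent_le_of_one_le hT.le hM (le_inv_min_self_one_div hT) hb hbc)
    (rpow_le_rpow (by positivity) (inv_anti₀ hm (min_self_one_div_le_min_one hT)) ha)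
    (by positivity) (by positivity)

end MinSelfOneDiv

section Exponents

variable {ρ r δ : ℝ}

lemma exponent_split (hs : 0 < ρ + 6 * δ) :
    ρ * r / (ρ + 6 * δ) + 6 * δ * r / (ρ + 6 * δ) = r := by
  field_simp

lemma exponent_mul_half (hs : 0 < ρ + 6 * δ) :
    2 * r / (ρ + 6 * δ) * (ρ / 2) = ρ * r / (ρ + 6 * δ) := by
  field_simp

lemma exponent_mul_neg (hs : 0 < ρ + 6 * δ) :
    2 * r / (ρ + 6 * δ) * (-(3 * δ)) = -(6 * δ * r / (ρ + 6 * δ)) := by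
  field_simp
  ring

end Exponents

section MollificationParameter

variable {T h ρ r δ : ℝ}

lemma mollificationParameter_pos (hT : 0 < T) (hh : 0 < h) :
    0 < mollificationParameter T h ρ r δ :=
  mul_pos (lt_min one_pos hT) (rpow_pos_of_pos (div_pos hh hT) _)

lemma mollificationParameter_le_min (hT : 0 < T) (hh : h ∈ Set.Ioc 0 T) (hρ : 0 < ρ)
    (hr : 0 ≤ r) (hδ : 0 ≤ δ) : mollificationParameter T h ρ r δ ≤ min 1 T := by
  have hq : (h / T) ^ (2 * r / (ρ + 6 * δ)) ≤ 1 :=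
    rpow_le_one (div_pos hh.1 hT).le ((div_le_one hT).2 hh.2) (by positivity)
  exact mul_le_of_le_one_right (lt_min one_pos hT).le hq

lemma mollificationParameter_rpow_half_le (hT : 0 < T) (hh : 0 ≤ h) (hρ : 0 < ρ) (hδ : 0 ≤ δ) :
    mollificationParameter T h ρ r δ ^ (ρ / 2) ≤
      h ^ (ρ * r / (ρ + 6 * δ)) / T ^ (ρ * r / (ρ + 6 * δ)) := by
  have hq : 0 ≤ h / T := div_nonneg hh hT.le
  rw [mollificationParameter, mul_rpow (lt_min one_pos hT).le (rpow_nonneg hq _),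
    ← rpow_mul hq, exponent_mul_half (by positivity), ← div_rpow hh hT.le]
  exact mul_le_of_le_one_left (rpow_nonneg hq _)
    (rpow_le_one (lt_min one_pos hT).le (min_le_left _ _) (by positivity))

lemma mollificationParameter_rpow_neg_mul_rpow (hT : 0 < T) (hh : 0 < h) (hs : 0 < ρ + 6 * δ) :
    mollificationParameter T h ρ r δ ^ (-(3 * δ)) * h ^ r =
      h ^ (ρ * r / (ρ + 6 * δ)) * ((min 1 T) ^ (-(3 * δ)) * T ^ (6 * δ * r / (ρ + 6 * δ))) := by
  have hq : 0 ≤ h / T := (div_pos hh hT).le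
  have hhβ := rpow_pos_of_pos hh (6 * δ * r / (ρ + 6 * δ))
  rw [mollificationParameter, mul_rpow (lt_min one_pos hT).le (rpow_nonneg hq _), ← rpow_mul hq,
    exponent_mul_neg hs, rpow_neg hq, div_rpow hh.le hT.le, inv_div]
  conv_lhs => rw [← exponent_split (r := r) hs, rpow_add hh]
  field_simp

lemma four_mul_mollificationParameter_rpow_half_le (hT : 0 < T) (hh : 0 < h) (hρ : 0 < ρ)
    (hr : 0 ≤ r) (hδ : 0 ≤ δ) :
    4 * mollificationParameter T h ρ r δ ^ (ρ / 2) ≤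
      57 * h ^ (ρ * r / (ρ + 6 * δ)) / (min T (1 / T)) ^ (r + 3 * δ) := by
  have hα : ρ * r / (ρ + 6 * δ) ≤ r + 3 * δ := by
    linarith [exponent_split (r := r) (show 0 < ρ + 6 * δ by positivity),
      show 0 ≤ 6 * δ * r / (ρ + 6 * δ) by positivity]
  have hhα := rpow_pos_of_pos hh (ρ * r / (ρ + 6 * δ))
  calc 4 * mollificationParameter T h ρ r δ ^ (ρ / 2)
      ≤ 4 * (h ^ (ρ * r / (ρ + 6 * δ)) / T ^ (ρ * r / (ρ + 6 * δ))) := by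
        gcongr; exact mollificationParameter_rpow_half_le hT hh.le hρ hδ
    _ ≤ 57 * h ^ (ρ * r / (ρ + 6 * δ)) / (min T (1 / T)) ^ (r + 3 * δ) := by
        rw [← mul_div_assoc]
        exact div_le_div₀ (by positivity) (by linarith)
          (rpow_pos_of_pos (min_self_one_div_pos hT) _)
          (min_self_one_div_rpow_le_rpow hT (by positivity) hα)

lemma mul_max_one_mollificationParameter_rpow_neg_mul_le (hT : 0 < T) (hh : h ∈ Set.Ioc 0 T)
    (hρ : 0 < ρ) (hr : 0 ≤ r) (hδ : 0 ≤ δ) :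
    57 * max 1 (mollificationParameter T h ρ r δ ^ (-(3 * δ))) * h ^ r ≤
      57 * h ^ (ρ * r / (ρ + 6 * δ)) / (min T (1 / T)) ^ (r + 3 * δ) := by
  have hs : 0 < ρ + 6 * δ := by positivity
  have hκ_le := mollificationParameter_le_min hT hh hρ hr hδ
  have hκ_rpow : 1 ≤ mollificationParameter T h ρ r δ ^ (-(3 * δ)) :=
    one_le_rpow_of_pos_of_le_one_of_nonpos (mollificationParameter_pos hT hh.1)
      (hκ_le.trans (min_le_left _ _)) (by linarith)
  have hβ : 6 * δ * r / (ρ + 6 * δ) ≤ r := by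
    linarith [exponent_split (r := r) hs, show 0 ≤ ρ * r / (ρ + 6 * δ) by positivity]
  have hpowers := min_one_rpow_neg_mul_rpow_le hT (a := 3 * δ) (by positivity) (by positivity) hβ
  calc 57 * max 1 (mollificationParameter T h ρ r δ ^ (-(3 * δ))) * h ^ r
      = 57 * (h ^ (ρ * r / (ρ + 6 * δ)) *
          (min 1 T ^ (-(3 * δ)) * T ^ (6 * δ * r / (ρ + 6 * δ)))) := by
        rw [max_eq_right hκ_rpow, mul_assoc, mollificationParameter_rpow_neg_mul_rpow hT hh.1 hs]
    _ ≤ 57 * (h ^ (ρ * r / (ρ + 6 * δ)) * (min T (1 / T) ^ (r + 3 * δ))⁻¹) := by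
        gcongr; exact rpow_nonneg hh.1.le _
    _ = 57 * h ^ (ρ * r / (ρ + 6 * δ)) / (min T (1 / T)) ^ (r + 3 * δ) := by ring

end MollificationParameter

/-- Optimization over the mollification parameter κ₀ = min{1,T}·(h/T)^(2r/(ρ+6δ)):
κ₀ ∈ (0, T] and the maximum of the two error terms is bounded by
57·h^(ρr/(ρ+6δ)) / (min{T, 1/T})^(r+3δ). -/
theorem stmt6 (T h ρ r δ : ℝ) (hT : 0 < T) (hh : h ∈ Set.Ioc (0 : ℝ) T)
    (hρ : 0 < ρ) (hr : 0 ≤ r) (hδ : 0 ≤ δ) :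
    0 < min 1 T * (h / T) ^ (2 * r / (ρ + 6 * δ)) ∧
      min 1 T * (h / T) ^ (2 * r / (ρ + 6 * δ)) ≤ T ∧
      max (4 * (min 1 T * (h / T) ^ (2 * r / (ρ + 6 * δ))) ^ (ρ / 2))
          (57 * max 1 ((min 1 T * (h / T) ^ (2 * r / (ρ + 6 * δ))) ^ (-(3 * δ))) * h ^ r)
        ≤ 57 * h ^ (ρ * r / (ρ + 6 * δ)) / (min T (1 / T)) ^ (r + 3 * δ) := by
  have hκ_le := mollificationParameter_le_min hT hh hρ hr hδ
  exact ⟨mollificationParameter_pos hT hh.1, hκ_le.trans (min_le_right _ _),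
    max_le (four_mul_mollificationParameter_rpow_half_le hT hh.1 hρ hr hδ)
      (mul_max_one_mollificationParameter_rpow_neg_mul_le hT hh hρ hr hδ)⟩
end
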